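/- arXiv:1104.1691 — 2 statements merged into one kernel-verified Lean document; each statement's English description precedes it below -/
import Mathlib

section
/- For p ≥ 2 there exists a constant C > 0 (depending only on p) such that for all vectors w₁, w₂ ∈ ℝ^N one has |w₂|^p ≥ |w₁|^p + p|w₁|^{p-2}⟨w₁, w₂ - w₁⟩ + |w₂ - w₁|^p/(2^{p-1} - 1). -/
/-!
Let `D(a, b) = ‖b‖^p - ‖a‖^p - p ‖a‖^(p-2) ⟪a, b - a⟫` be the Bregman divergence of `‖·‖^p`;
it is nonnegative by convexity. With `m` the midpoint of `a` and `b`, Clarkson's inequality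
`‖a + b‖^p + ‖a - b‖^p ≤ 2^(p-1) (‖a‖^p + ‖b‖^p)` (valid for `p ≥ 2`) is exactly
`2 D(a, m) + 2^(1-p) ‖b - a‖^p ≤ D(a, b)`. As `‖m - a‖^p = 2^(1-p)/2 ‖b - a‖^p`, iterating this
along successive midpoints gives `D(a, b) ≥ (∑_{k ≥ 1} 2^(k(1-p))) ‖b - a‖^p`, and the geometric
series sums to `1 / (2^(p-1) - 1)`.
-/

open Real

lemma Real.rpow_add_le_mul_rpow_add_rpow {p a b : ℝ} (ha : 0 ≤ a) (hb : 0 ≤ b) (hp : 1 ≤ p) :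
    (a + b) ^ p ≤ 2 ^ (p - 1) * (a ^ p + b ^ p) := by
  lift a to NNReal using ha
  lift b to NNReal using hb
  exact_mod_cast NNReal.rpow_add_le_mul_rpow_add_rpow a b hp

lemma Real.rpow_add_mul_rpow_sub_one_mul_sub_le {p s t : ℝ} (hp : 1 ≤ p) (hs : 0 < s)
    (ht : 0 ≤ t) : s ^ p + p * s ^ (p - 1) * (t - s) ≤ t ^ p := by
  have bernoulli := one_add_mul_self_le_rpow_one_add (s := t / s - 1) (by
    have := div_nonneg ht hs.le; linarith) hp
  rw [add_sub_cancel, div_rpow ht hs.le, le_div_iff₀ (rpow_pos_of_pos hs p)] at bernoulli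
  have hsp : s ^ p = s ^ (p - 1) * s := by rw [← rpow_add_one hs.ne', sub_add_cancel]
  calc s ^ p + p * s ^ (p - 1) * (t - s) = (1 + p * (t / s - 1)) * s ^ p := by
        rw [hsp]; field_simp
    _ ≤ t ^ p := bernoulli

section

variable {E : Type*} [NormedAddCommGroup E] [InnerProductSpace ℝ E]

theorem norm_add_rpow_add_norm_sub_rpow_le {p : ℝ} (hp : 2 ≤ p) (a b : E) :
    ‖a + b‖ ^ p + ‖a - b‖ ^ p ≤ 2 ^ (p - 1) * (‖a‖ ^ p + ‖b‖ ^ p) := by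
  have hq : 1 ≤ p / 2 := by linarith
  have sq_rpow : ∀ x : ℝ, 0 ≤ x → x ^ p = (x ^ 2) ^ (p / 2) := fun x hx ↦ by
    rw [← rpow_natCast, ← rpow_mul hx]; norm_num [mul_div_cancel₀]
  have parallelogram : ‖a + b‖ ^ 2 + ‖a - b‖ ^ 2 = 2 * (‖a‖ ^ 2 + ‖b‖ ^ 2) := by
    simpa only [sq] using parallelogram_law_with_norm ℝ a b
  simp only [sq_rpow _ (norm_nonneg _)]
  calc (‖a + b‖ ^ 2) ^ (p / 2) + (‖a - b‖ ^ 2) ^ (p / 2)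
      ≤ (‖a + b‖ ^ 2 + ‖a - b‖ ^ 2) ^ (p / 2) :=
        add_rpow_le_rpow_add (by positivity) (by positivity) hq
    _ = 2 ^ (p / 2) * (‖a‖ ^ 2 + ‖b‖ ^ 2) ^ (p / 2) := by
        rw [parallelogram, mul_rpow zero_le_two (by positivity)]
    _ ≤ 2 ^ (p / 2) * (2 ^ (p / 2 - 1) * ((‖a‖ ^ 2) ^ (p / 2) + (‖b‖ ^ 2) ^ (p / 2))) := by
        gcongr; exact rpow_add_le_mul_rpow_add_rpow (by positivity) (by positivity) hq
    _ = 2 ^ (p - 1) * ((‖a‖ ^ 2) ^ (p / 2) + (‖b‖ ^ 2) ^ (p / 2)) := by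
        rw [← mul_assoc, ← rpow_add two_pos]; ring_nf

lemma norm_invOf_two_smul_rpow (p : ℝ) (v : E) :
    ‖(⅟2 : ℝ) • v‖ ^ p = 2 ^ (1 - p) / 2 * ‖v‖ ^ p := by
  rw [norm_smul, mul_rpow (norm_nonneg _) (norm_nonneg _), show ‖(⅟2 : ℝ)‖ = 2⁻¹ by norm_num,
    inv_rpow zero_le_two, rpow_sub two_pos, rpow_one]
  ring

noncomputable def bregmanNormRpow (p : ℝ) (a b : E) : ℝ :=
  ‖b‖ ^ p - ‖a‖ ^ p - p * ‖a‖ ^ (p - 2) * inner ℝ a (b - a)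

theorem bregmanNormRpow_nonneg {p : ℝ} (hp : 1 ≤ p) (a b : E) : 0 ≤ bregmanNormRpow p a b := by
  rw [bregmanNormRpow, sub_nonneg, le_sub_iff_add_le']
  rcases eq_or_ne a 0 with rfl | ha
  · simp [zero_rpow (by linarith : p ≠ 0), rpow_nonneg]
  have hs : 0 < ‖a‖ := norm_pos_iff.mpr ha
  have cauchy_schwarz : inner ℝ a (b - a) ≤ ‖a‖ * (‖b‖ - ‖a‖) := by
    rw [inner_sub_right, real_inner_self_eq_norm_sq, mul_sub, ← sq]
    linarith [real_inner_le_norm a b]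
  have hsp : ‖a‖ ^ (p - 2) * ‖a‖ = ‖a‖ ^ (p - 1) := by
    rw [← rpow_add_one hs.ne']; ring_nf
  calc ‖a‖ ^ p + p * ‖a‖ ^ (p - 2) * inner ℝ a (b - a)
      ≤ ‖a‖ ^ p + p * ‖a‖ ^ (p - 2) * (‖a‖ * (‖b‖ - ‖a‖)) := by gcongr
    _ = ‖a‖ ^ p + p * ‖a‖ ^ (p - 1) * (‖b‖ - ‖a‖) := by rw [← hsp]; ring
    _ ≤ ‖b‖ ^ p := rpow_add_mul_rpow_sub_one_mul_sub_le hp hs (norm_nonneg b)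

theorem two_mul_bregmanNormRpow_midpoint_add_le {p : ℝ} (hp : 2 ≤ p) (a b : E) :
    2 * bregmanNormRpow p a (midpoint ℝ a b) + 2 ^ (1 - p) * ‖b - a‖ ^ p
      ≤ bregmanNormRpow p a b := by
  have hinner : inner ℝ a (midpoint ℝ a b - a) = inner ℝ a (b - a) / 2 := by
    rw [midpoint_sub_left, real_inner_smul_right]; norm_num; ring
  have clarkson := mul_le_mul_of_nonneg_left (norm_add_rpow_add_norm_sub_rpow_le hp a b)
    (rpow_nonneg zero_le_two (1 - p))
  rw [← norm_neg (a - b), neg_sub, ← mul_assoc, ← rpow_add two_pos] at clarkson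
  norm_num at clarkson
  rw [bregmanNormRpow, bregmanNormRpow, hinner, midpoint_eq_smul_add, norm_invOf_two_smul_rpow]
  linarith

end

theorem mul_le_of_two_mul_comp_add_le {X : Type*} {F φ : X → ℝ} {T : X → X} {r : ℝ}
    (hr₀ : 0 ≤ r) (hr₁ : r < 1) (hF : ∀ x, 0 ≤ F x) (hφT : ∀ x, φ (T x) = r / 2 * φ x)
    (hstep : ∀ x, 2 * F (T x) + r * φ x ≤ F x) (x : X) :
    r / (1 - r) * φ x ≤ F x := by
  have partial_sums : ∀ n, ∀ x, (∑ k ∈ Finset.range n, r ^ (k + 1)) * φ x ≤ F x := by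
    intro n
    induction n with
    | zero => simpa using hF
    | succ n ih =>
      intro x
      have hsucc : ∑ k ∈ Finset.range (n + 1), r ^ (k + 1)
          = r * ∑ k ∈ Finset.range n, r ^ (k + 1) + r := by
        rw [Finset.sum_range_succ', Finset.mul_sum]; simp [pow_succ']
      calc (∑ k ∈ Finset.range (n + 1), r ^ (k + 1)) * φ x
          = 2 * ((∑ k ∈ Finset.range n, r ^ (k + 1)) * φ (T x)) + r * φ x := by
            rw [hsucc, hφT]; ring
        _ ≤ 2 * F (T x) + r * φ x := by gcongr; exact ih _
        _ ≤ F x := hstep x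
  have hsum : HasSum (fun k ↦ r ^ (k + 1)) (r / (1 - r)) := by
    simpa [pow_succ', div_eq_mul_inv] using (hasSum_geometric_of_lt_one hr₀ hr₁).mul_left r
  exact le_of_tendsto' (hsum.tendsto_sum_nat.mul_const (φ x)) (partial_sums · x)

/-- For `p ≥ 2`, for all vectors `w₁ w₂ ∈ ℝ^N`:
`|w₂|^p ≥ |w₁|^p + p|w₁|^{p-2}⟨w₁, w₂-w₁⟩ + |w₂-w₁|^p/(2^{p-1}-1)`. -/
theorem stmt_0 (p : ℝ) (hp : 2 ≤ p) (N : ℕ)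
    (w₁ w₂ : EuclideanSpace ℝ (Fin N)) :
    ‖w₁‖ ^ p + p * ‖w₁‖ ^ (p - 2) * (inner ℝ w₁ (w₂ - w₁) : ℝ)
      + ‖w₂ - w₁‖ ^ p / (2 ^ (p - 1) - 1) ≤ ‖w₂‖ ^ p := by
  have hr₁ : (2 : ℝ) ^ (1 - p) < 1 := rpow_lt_one_of_one_lt_of_neg one_lt_two (by linarith)
  have hr : (2 : ℝ) ^ (1 - p) / (1 - 2 ^ (1 - p)) = 1 / (2 ^ (p - 1) - 1) := by
    rw [show p - 1 = -(1 - p) by ring, rpow_neg zero_le_two]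
    field_simp
  have key := mul_le_of_two_mul_comp_add_le (φ := (‖· - w₁‖ ^ p))
    (rpow_nonneg zero_le_two _) hr₁ (bregmanNormRpow_nonneg (by linarith) w₁)
    (fun b ↦ by rw [midpoint_sub_left, norm_invOf_two_smul_rpow])
    (two_mul_bregmanNormRpow_midpoint_add_le hp w₁) w₂
  rw [hr, one_div_mul_eq_div, bregmanNormRpow] at key
  linarith
end

section
/- Let Ω ⊂ ℝ^N be bounded open, 1 < p < ∞, δ > 0 with δ < 2 + 1/(p−1), and let u̲ ∈ C(Ω̄) satisfy c₁ d(x)^{p/(δ+p−1)} ≤ u̲(x) for some c₁ > 0 when δ > 1 (resp. c₁ d(x) ≤ u̲ when δ < 1, resp. c₁ d(x) log^{1/p}(k/d(x)) ≤ u̲ when δ = 1, k large). Then ∫_Ω (d(x)/u̲(x)^δ)^{p/(p−1)} dx < +∞. -/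
open MeasureTheory

/-- Main algebraic estimate for the power cases. -/
lemma calc_bound (c₁ t uu a δ q : ℝ) (hc : 0 < c₁) (ht : 0 < t) (hδ : 0 < δ)
    (hq : 0 ≤ q) (hu : c₁ * t ^ a ≤ uu) :
    (t / uu ^ δ) ^ q ≤ ((c₁ ^ δ)⁻¹) ^ q * t ^ ((1 - a * δ) * q) := by
  have hta : (0:ℝ) < t ^ a := Real.rpow_pos_of_pos ht a
  have huu : 0 < uu := lt_of_lt_of_le (mul_pos hc hta) hu
  have h1 : c₁ ^ δ * t ^ (a * δ) ≤ uu ^ δ := by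
    have := Real.rpow_le_rpow (mul_pos hc hta).le hu hδ.le
    rwa [Real.mul_rpow hc.le hta.le, ← Real.rpow_mul ht.le] at this
  have hcd : (0:ℝ) < c₁ ^ δ := Real.rpow_pos_of_pos hc δ
  have htad : (0:ℝ) < t ^ (a * δ) := Real.rpow_pos_of_pos ht _
  have h2 : t / uu ^ δ ≤ (c₁ ^ δ)⁻¹ * t ^ (1 - a * δ) := by
    have step : t / uu ^ δ ≤ t / (c₁ ^ δ * t ^ (a * δ)) := by
      gcongr
    have heq : t / (c₁ ^ δ * t ^ (a * δ)) = (c₁ ^ δ)⁻¹ * t ^ (1 - a * δ) := by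
      rw [Real.rpow_sub ht, Real.rpow_one]
      field_simp
    linarith [step, heq ▸ step]
  have h3 : (t / uu ^ δ) ^ q ≤ ((c₁ ^ δ)⁻¹ * t ^ (1 - a * δ)) ^ q :=
    Real.rpow_le_rpow (div_nonneg ht.le (Real.rpow_pos_of_pos huu δ).le) h2 hq
  calc (t / uu ^ δ) ^ q ≤ ((c₁ ^ δ)⁻¹ * t ^ (1 - a * δ)) ^ q := h3
    _ = ((c₁ ^ δ)⁻¹) ^ q * t ^ ((1 - a * δ) * q) := by
        rw [Real.mul_rpow (inv_nonneg.2 hcd.le) (Real.rpow_nonneg ht.le _),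
          ← Real.rpow_mul ht.le]

/-- Comparison lemma: a function bounded on `Ω` by `C * d^(-σ)` with `σ < 1` is integrable. -/
lemma aux_int {N : ℕ} {Ω : Set (EuclideanSpace ℝ (Fin N))} (hΩo : IsOpen Ω)
    (hd : ∀ σ : ℝ, σ < 1 →
      IntegrableOn (fun x => Metric.infDist x (frontier Ω) ^ (-σ)) Ω)
    (f : EuclideanSpace ℝ (Fin N) → ℝ)
    (hf : AEStronglyMeasurable f (volume.restrict Ω))
    (σ C : ℝ) (hσ : σ < 1)
    (hb : ∀ x ∈ Ω, ‖f x‖ ≤ C * Metric.infDist x (frontier Ω) ^ (-σ)) :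
    IntegrableOn f Ω := by
  have hg : IntegrableOn (fun x => C * Metric.infDist x (frontier Ω) ^ (-σ)) Ω :=
    (hd σ hσ).const_mul C
  exact hg.mono' hf ((ae_restrict_iff' hΩo.measurableSet).2 (ae_of_all _ hb))

/-- Key integrability estimate behind the restriction `δ < 2 + 1/(p-1)`: if `u̲` is
continuous on `Ω` and bounded below by the cone-`𝒞` barrier (`c₁ d` for `δ < 1`,
`c₁ d log^{1/p}(k/d)` for `δ = 1` with `k` large, `c₁ d^{p/(δ+p-1)}` for `δ > 1`),
then `∫_Ω (d(x)/u̲(x)^δ)^{p/(p-1)} dx < ∞`.  Here `d(x) = dist(x, ∂Ω)` and the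
smoothness of the bounded domain `Ω` is encoded through the property that
`∫_Ω d(x)^{-σ} dx < ∞` for every `σ < 1`. -/
theorem stmt_16 (N : ℕ) (p δ : ℝ) (hp : 1 < p) (hδ0 : 0 < δ)
    (hδ : δ < 2 + 1 / (p - 1))
    (Ω : Set (EuclideanSpace ℝ (Fin N))) (hΩo : IsOpen Ω)
    (hΩb : Bornology.IsBounded Ω)
    (hd : ∀ σ : ℝ, σ < 1 →
      IntegrableOn (fun x => Metric.infDist x (frontier Ω) ^ (-σ)) Ω)
    (u : EuclideanSpace ℝ (Fin N) → ℝ) (hu : ContinuousOn u Ω)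
    (hlow :
      (δ < 1 ∧ ∃ c₁ > (0 : ℝ), ∀ x ∈ Ω,
        c₁ * Metric.infDist x (frontier Ω) ≤ u x) ∨
      (δ = 1 ∧ ∃ c₁ > (0 : ℝ), ∃ k > (0 : ℝ),
        (∀ x ∈ Ω, Real.exp 1 * Metric.infDist x (frontier Ω) ≤ k) ∧
        ∀ x ∈ Ω, c₁ * Metric.infDist x (frontier Ω) *
          Real.log (k / Metric.infDist x (frontier Ω)) ^ (1 / p) ≤ u x) ∨
      (1 < δ ∧ ∃ c₁ > (0 : ℝ), ∀ x ∈ Ω,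
        c₁ * Metric.infDist x (frontier Ω) ^ (p / (δ + p - 1)) ≤ u x)) :
    IntegrableOn
      (fun x => (Metric.infDist x (frontier Ω) / u x ^ δ) ^ (p / (p - 1))) Ω := by
  have hp0 : (0:ℝ) < p - 1 := by linarith
  set q : ℝ := p / (p - 1) with hq
  have hq0 : 0 < q := div_pos (by linarith) hp0
  set d : EuclideanSpace ℝ (Fin N) → ℝ := fun x => Metric.infDist x (frontier Ω) with hdd
  have hdnn : ∀ x, 0 ≤ d x := fun x => Metric.infDist_nonneg
  -- measurability
  have hdm : AEMeasurable d (volume.restrict Ω) :=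
    (Metric.continuous_infDist_pt (frontier Ω)).measurable.aemeasurable
  have hum : AEMeasurable u (volume.restrict Ω) :=
    ContinuousOn.aemeasurable hu hΩo.measurableSet
  have hfm : AEStronglyMeasurable
      (fun x => (d x / u x ^ δ) ^ q) (volume.restrict Ω) :=
    (((hdm.div (hum.pow aemeasurable_const)).pow
      (aemeasurable_const : AEMeasurable (fun _ => q) _)) :
        AEMeasurable _ _).aestronglyMeasurable
  rcases hlow with ⟨h1, c₁, hc₁, hub⟩ | ⟨h1, c₁, hc₁, k, hk, hke, hub⟩ | ⟨h1, c₁, hc₁, hub⟩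
  · -- δ < 1
    refine aux_int hΩo hd _ hfm ((δ - 1) * q) (((c₁ ^ δ)⁻¹) ^ q) (by nlinarith) ?_
    intro x hx
    have hux := hub x hx
    rcases eq_or_lt_of_le (hdnn x) with h0 | h0
    · show ‖(d x / u x ^ δ) ^ q‖ ≤ ((c₁ ^ δ)⁻¹) ^ q * d x ^ (-((δ - 1) * q))
      rw [← h0]
      simp only [zero_div, Real.zero_rpow hq0.ne', norm_zero]
      positivity
    · have hu0 : 0 < u x := lt_of_lt_of_le (mul_pos hc₁ h0) hux
      have := calc_bound c₁ (d x) (u x) 1 δ q hc₁ h0 hδ0 hq0.le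
        (by rwa [Real.rpow_one])
      rw [Real.norm_eq_abs, abs_of_nonneg
        (Real.rpow_nonneg (div_nonneg (hdnn x) (Real.rpow_nonneg hu0.le δ)) q)]
      calc (d x / u x ^ δ) ^ q ≤ ((c₁ ^ δ)⁻¹) ^ q * d x ^ ((1 - 1 * δ) * q) := this
        _ = ((c₁ ^ δ)⁻¹) ^ q * d x ^ (-((δ - 1) * q)) := by ring_nf
  · -- δ = 1
    subst h1
    refine aux_int hΩo hd _ hfm 0 ((c₁⁻¹) ^ q) (by norm_num) ?_
    intro x hx
    have hux := hub x hx
    show ‖(d x / u x ^ (1:ℝ)) ^ q‖ ≤ (c₁⁻¹) ^ q * d x ^ (-(0:ℝ))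
    rw [neg_zero, Real.rpow_zero, mul_one]
    rcases eq_or_lt_of_le (hdnn x) with h0 | h0
    · rw [← h0]
      simp only [zero_div, Real.zero_rpow hq0.ne', norm_zero]
      positivity
    · have hL : 1 ≤ Real.log (k / d x) := by
        have : Real.exp 1 ≤ k / d x := (le_div_iff₀ h0).2 (by
          have := hke x hx; linarith [this])
        calc (1:ℝ) = Real.log (Real.exp 1) := (Real.log_exp 1).symm
          _ ≤ Real.log (k / d x) := Real.log_le_log (Real.exp_pos 1) this
      have hL1 : 1 ≤ Real.log (k / d x) ^ (1 / p) := by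
        calc (1:ℝ) = (1:ℝ) ^ (1/p) := (Real.one_rpow _).symm
          _ ≤ Real.log (k / d x) ^ (1/p) :=
            Real.rpow_le_rpow zero_le_one hL (by positivity)
      have hu0 : 0 < u x :=
        lt_of_lt_of_le (by nlinarith [mul_pos hc₁ h0]) hux
      have hstep : d x / u x ^ (1:ℝ) ≤ c₁⁻¹ := by
        rw [Real.rpow_one]
        rw [div_le_iff₀ hu0]
        calc d x = c₁⁻¹ * (c₁ * d x * 1) := by field_simp
          _ ≤ c₁⁻¹ * (c₁ * d x * Real.log (k / d x) ^ (1/p)) := by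
              have : c₁ * d x * 1 ≤ c₁ * d x * Real.log (k / d x) ^ (1/p) := by
                have := mul_pos hc₁ h0
                nlinarith
              exact mul_le_mul_of_nonneg_left this (by positivity)
          _ ≤ c₁⁻¹ * u x := mul_le_mul_of_nonneg_left hux (by positivity)
      rw [Real.norm_eq_abs, abs_of_nonneg
        (Real.rpow_nonneg (div_nonneg (hdnn x) (Real.rpow_nonneg hu0.le 1)) q)]
      exact Real.rpow_le_rpow (div_nonneg (hdnn x) (Real.rpow_nonneg hu0.le 1)) hstep hq0.le
  · -- δ > 1
    have hD : (0:ℝ) < δ + p - 1 := by linarith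
    set a : ℝ := p / (δ + p - 1) with ha
    have ha0 : 0 < a := div_pos (by linarith) hD
    have hσ : (a * δ - 1) * q < 1 := by
      have key : δ * (p - 1) < 2 * p - 1 := by
        have := mul_lt_mul_of_pos_right hδ hp0
        have h1p : (1 / (p - 1)) * (p - 1) = 1 := by field_simp
        nlinarith
      rw [ha, hq, div_mul_eq_mul_div, div_sub_one hD.ne', div_mul_div_comm,
        div_lt_one (by positivity)]
      nlinarith [mul_pos hp0 (sub_pos.2 key)]
    refine aux_int hΩo hd _ hfm ((a * δ - 1) * q) (((c₁ ^ δ)⁻¹) ^ q) hσ ?_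
    intro x hx
    have hux := hub x hx
    rcases eq_or_lt_of_le (hdnn x) with h0 | h0
    · show ‖(d x / u x ^ δ) ^ q‖ ≤ ((c₁ ^ δ)⁻¹) ^ q * d x ^ (-((a * δ - 1) * q))
      rw [← h0]
      simp only [zero_div, Real.zero_rpow hq0.ne', norm_zero]
      positivity
    · have hu0 : 0 < u x :=
        lt_of_lt_of_le (mul_pos hc₁ (Real.rpow_pos_of_pos h0 a)) hux
      have := calc_bound c₁ (d x) (u x) a δ q hc₁ h0 hδ0 hq0.le hux
      rw [Real.norm_eq_abs, abs_of_nonneg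
        (Real.rpow_nonneg (div_nonneg (hdnn x) (Real.rpow_nonneg hu0.le δ)) q)]
      calc (d x / u x ^ δ) ^ q ≤ ((c₁ ^ δ)⁻¹) ^ q * d x ^ ((1 - a * δ) * q) := this
        _ = ((c₁ ^ δ)⁻¹) ^ q * d x ^ (-((a * δ - 1) * q)) := by ring_nf
end
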